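/- Let G₁, G₂, Ḡ₁, Ḡ₂, η, η̄, θ be smooth functions on an open set U ⊆ ℝ², with η̄ = η + 3θ, and suppose the transformation law Ḡ₁ = cos(θ)G₁ - sin(θ)G₂ - 3(cos(θ)∂θ/∂x + sin(θ)∂θ/∂y), Ḡ₂ = sin(θ)G₁ + cos(θ)G₂ + 3(-sin(θ)∂θ/∂x + cos(θ)∂θ/∂y) holds, where the directional derivatives of η̄ are taken along Y₁ = cos(θ)X₁ + sin(θ)X₂, Y₂ = -sin(θ)X₁ + cos(θ)X₂ with X₁ = ∂/∂x, X₂ = ∂/∂y. Then (dη̄(Y₁) + Ḡ₁, dη̄(Y₂) - Ḡ₂)ᵗ = R(θ)·(dη(X₁) + G₁, dη(X₂) - G₂)ᵗ, where R(θ) is the standard rotation matrix. In particular, dη(X₁) + G₁ = 0 and dη(X₂) - G₂ = 0 if and only if dη̄(Y₁) + Ḡ₁ = 0 and dη̄(Y₂) - Ḡ₂ = 0. -/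

import Mathlib

open Real

theorem stmt16 (U : Set (ℝ × ℝ)) (hU : IsOpen U)
    (G₁ G₂ Gbar₁ Gbar₂ η θ : ℝ × ℝ → ℝ)
    (hη : ∀ p ∈ U, DifferentiableAt ℝ η p)
    (hθ : ∀ p ∈ U, DifferentiableAt ℝ θ p)
    (hG1 : ∀ p ∈ U, Gbar₁ p =
      Real.cos (θ p) * G₁ p - Real.sin (θ p) * G₂ p -
        3 * (Real.cos (θ p) * fderiv ℝ θ p (1, 0) + Real.sin (θ p) * fderiv ℝ θ p (0, 1)))
    (hG2 : ∀ p ∈ U, Gbar₂ p =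
      Real.sin (θ p) * G₁ p + Real.cos (θ p) * G₂ p +
        3 * (-Real.sin (θ p) * fderiv ℝ θ p (1, 0) + Real.cos (θ p) * fderiv ℝ θ p (0, 1))) :
    ∀ p ∈ U,
      ((Real.cos (θ p) * fderiv ℝ (fun q => η q + 3 * θ q) p (1, 0) +
          Real.sin (θ p) * fderiv ℝ (fun q => η q + 3 * θ q) p (0, 1)) + Gbar₁ p =
        Real.cos (θ p) * (fderiv ℝ η p (1, 0) + G₁ p) +
          Real.sin (θ p) * (fderiv ℝ η p (0, 1) - G₂ p)) ∧
      ((-Real.sin (θ p) * fderiv ℝ (fun q => η q + 3 * θ q) p (1, 0) +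
          Real.cos (θ p) * fderiv ℝ (fun q => η q + 3 * θ q) p (0, 1)) - Gbar₂ p =
        -Real.sin (θ p) * (fderiv ℝ η p (1, 0) + G₁ p) +
          Real.cos (θ p) * (fderiv ℝ η p (0, 1) - G₂ p)) ∧
      ((fderiv ℝ η p (1, 0) + G₁ p = 0 ∧ fderiv ℝ η p (0, 1) - G₂ p = 0) ↔
        ((Real.cos (θ p) * fderiv ℝ (fun q => η q + 3 * θ q) p (1, 0) +
            Real.sin (θ p) * fderiv ℝ (fun q => η q + 3 * θ q) p (0, 1)) + Gbar₁ p = 0 ∧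
          (-Real.sin (θ p) * fderiv ℝ (fun q => η q + 3 * θ q) p (1, 0) +
            Real.cos (θ p) * fderiv ℝ (fun q => η q + 3 * θ q) p (0, 1)) - Gbar₂ p = 0)) := by

  intro p hp
  have hd : fderiv ℝ (fun q => η q + 3 * θ q) p =
      fderiv ℝ η p + (3 : ℝ) • fderiv ℝ θ p := by
    rw [fderiv_fun_add (hη p hp) ((hθ p hp).const_mul 3)]
    congr 1
    rw [fderiv_const_mul (hθ p hp)]
  have h10 : fderiv ℝ (fun q => η q + 3 * θ q) p (1, 0)
      = fderiv ℝ η p (1, 0) + 3 * fderiv ℝ θ p (1, 0) := by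
    rw [hd]; simp [smul_eq_mul]
  have h01 : fderiv ℝ (fun q => η q + 3 * θ q) p (0, 1)
      = fderiv ℝ η p (0, 1) + 3 * fderiv ℝ θ p (0, 1) := by
    rw [hd]; simp [smul_eq_mul]
  have e1 : (Real.cos (θ p) * fderiv ℝ (fun q => η q + 3 * θ q) p (1, 0) +
          Real.sin (θ p) * fderiv ℝ (fun q => η q + 3 * θ q) p (0, 1)) + Gbar₁ p =
        Real.cos (θ p) * (fderiv ℝ η p (1, 0) + G₁ p) +
          Real.sin (θ p) * (fderiv ℝ η p (0, 1) - G₂ p) := by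
    rw [h10, h01, hG1 p hp]; ring
  have e2 : (-Real.sin (θ p) * fderiv ℝ (fun q => η q + 3 * θ q) p (1, 0) +
          Real.cos (θ p) * fderiv ℝ (fun q => η q + 3 * θ q) p (0, 1)) - Gbar₂ p =
        -Real.sin (θ p) * (fderiv ℝ η p (1, 0) + G₁ p) +
          Real.cos (θ p) * (fderiv ℝ η p (0, 1) - G₂ p) := by
    rw [h10, h01, hG2 p hp]; ring
  refine ⟨e1, e2, ?_⟩
  rw [e1, e2]
  constructor
  · rintro ⟨ha, hb⟩; rw [ha, hb]; constructor <;> ring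
  · rintro ⟨ha, hb⟩
    have hcs := Real.sin_sq_add_cos_sq (θ p)
    refine ⟨?_, ?_⟩
    · linear_combination Real.cos (θ p) * ha - Real.sin (θ p) * hb -
        ((fderiv ℝ η p) (1, 0) + G₁ p) * hcs
    · linear_combination Real.sin (θ p) * ha + Real.cos (θ p) * hb -
        ((fderiv ℝ η p) (0, 1) - G₂ p) * hcs
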